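/- If v > 0 and c > v, then the pure strategy HD (the second standard basis vector e₂ of ℝ⁴) is a strict symmetric Nash equilibrium of the asymmetric Hawk-Dove game: for every mixed strategy σ ∈ ℝ⁴ (entries nonnegative, summing to 1), σᵀ A e₂ ≤ e₂ᵀ A e₂ = v/2, with strict inequality whenever σ ≠ e₂. -/
import Mathlib


open Matrix

noncomputable section

/-- The payoff matrix of the asymmetric Hawk-Dove game, with rows and columns
indexed by the pure strategies (HH, HD, DH, DD). -/
def A (v c : ℝ) : Matrix (Fin 4) (Fin 4) ℝ :=
  !![(v - c)/2, (3*v - c)/4, (3*v - c)/4, v;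
     (v - c)/4, v/2,         (2*v - c)/4, 3*v/4;
     (v - c)/4, (2*v - c)/4, v/2,         3*v/4;
     0,         v/4,         v/4,         v/2]

theorem strict_nash_HD (v c : ℝ) (hv : 0 < v) (hc : v < c) :
    (Pi.single (1 : Fin 4) (1 : ℝ)) ⬝ᵥ (A v c).mulVec (Pi.single 1 1) = v/2 ∧
    ∀ σ : Fin 4 → ℝ, (∀ i, 0 ≤ σ i) → (∑ i, σ i) = 1 →
      (σ ⬝ᵥ (A v c).mulVec (Pi.single 1 1)
        ≤ (Pi.single (1 : Fin 4) (1 : ℝ)) ⬝ᵥ (A v c).mulVec (Pi.single 1 1) ∧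
      (σ ≠ Pi.single 1 1 →
        σ ⬝ᵥ (A v c).mulVec (Pi.single 1 1)
          < (Pi.single (1 : Fin 4) (1 : ℝ)) ⬝ᵥ (A v c).mulVec (Pi.single 1 1))) := by
  have hval : ∀ σ : Fin 4 → ℝ, σ ⬝ᵥ (A v c).mulVec (Pi.single 1 1)
      = σ 0 * ((3*v - c)/4) + σ 1 * (v/2) + σ 2 * ((2*v - c)/4) + σ 3 * (v/4) := by
    intro σ
    simp [A, Matrix.mulVec, dotProduct, Fin.sum_univ_four, Pi.single_apply]
  have he : (Pi.single (1 : Fin 4) (1 : ℝ)) ⬝ᵥ (A v c).mulVec (Pi.single 1 1) = v/2 := by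
    rw [hval]
    simp [Pi.single_apply]
  refine ⟨he, fun σ hσ hsum => ?_⟩
  rw [Fin.sum_univ_four] at hsum
  have h0 := hσ 0; have h1 := hσ 1; have h2 := hσ 2; have h3 := hσ 3
  rw [hval, he]
  constructor
  · nlinarith
  · intro hne
    have : σ 0 > 0 ∨ σ 2 > 0 ∨ σ 3 > 0 := by
      by_contra h
      push_neg at h
      obtain ⟨a, b, d⟩ := h
      have e0 : σ 0 = 0 := le_antisymm a h0
      have e2 : σ 2 = 0 := le_antisymm b h2
      have e3 : σ 3 = 0 := le_antisymm d h3
      apply hne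
      funext i
      fin_cases i <;> simp [e0, e2, e3, Pi.single_apply] <;> linarith
    rcases this with h | h | h <;> nlinarith
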